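/- If G is a finite nilpotent group whose order is divisible by at least two distinct primes, then the average order o(G) is at least 3.5, with equality only when G ≅ C6; moreover if G is not isomorphic to C6 then o(G) > 4. -/
import Mathlib
/-- `psi G` is the sum of the orders of the elements of `G`. -/
noncomputable def psi (G : Type*) [Group G] : ℕ := ∑ᶠ x : G, orderOf x

/-- `avgO G` is the average order of the elements of `G`. -/
noncomputable def avgO (G : Type*) [Group G] : ℚ := psi G / Nat.card G

lemma psi_eq_sum (G : Type*) [Group G] [Fintype G] : psi G = ∑ x : G, orderOf x :=
  finsum_eq_sum_of_fintype _

lemma psi_congr {G H : Type*} [Group G] [Group H] [Finite G] (e : G ≃* H) : psi G = psi H := by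
  have : Fintype G := Fintype.ofFinite G
  have : Finite H := Finite.of_equiv G e.toEquiv
  have : Fintype H := Fintype.ofFinite H
  rw [psi_eq_sum, psi_eq_sum, ← Equiv.sum_comp e.toEquiv]
  exact Finset.sum_congr rfl fun x _ => (e.orderOf_eq x).symm

lemma avgO_congr {G H : Type*} [Group G] [Group H] [Finite G] (e : G ≃* H) : avgO G = avgO H := by
  rw [avgO, avgO, psi_congr e, Nat.card_congr e.toEquiv]

lemma nat_prod_dvd_of_coprime {ι : Type*} {s : Finset ι} {a : ι → ℕ} {n : ℕ}
    (hc : ∀ i ∈ s, ∀ j ∈ s, i ≠ j → Nat.Coprime (a i) (a j))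
    (hd : ∀ i ∈ s, a i ∣ n) : (∏ i ∈ s, a i) ∣ n := by
  classical
  induction s using Finset.induction_on with
  | empty => simpa using one_dvd n
  | @insert i s' hi ih =>
    rw [Finset.prod_insert hi]
    refine Nat.Coprime.mul_dvd_of_dvd_of_dvd ?_ (hd i (by simp)) (ih ?_ ?_)
    · exact Nat.Coprime.prod_right fun j hj =>
        hc i (by simp) j (by simp [hj]) (fun h => hi (h ▸ hj))
    · exact fun x hx y hy hxy => hc x (by simp [hx]) y (by simp [hy]) hxy
    · exact fun x hx => hd x (by simp [hx])

lemma orderOf_pi {ι : Type*} [Fintype ι] {H : ι → Type*} [∀ i, Group (H i)]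
    [∀ i, Finite (H i)]
    (hco : ∀ i j, i ≠ j → Nat.Coprime (Nat.card (H i)) (Nat.card (H j)))
    (f : ∀ i, H i) : orderOf f = ∏ i, orderOf (f i) := by
  classical
  refine Nat.dvd_antisymm ?_ ?_
  · apply orderOf_dvd_of_pow_eq_one
    funext i
    rw [Pi.pow_apply, Pi.one_apply]
    exact orderOf_dvd_iff_pow_eq_one.mp (Finset.dvd_prod_of_mem _ (Finset.mem_univ i))
  · refine nat_prod_dvd_of_coprime ?_ ?_
    · intro i _ j _ hij
      exact Nat.Coprime.coprime_dvd_left (orderOf_dvd_natCard (f i))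
        (Nat.Coprime.coprime_dvd_right (orderOf_dvd_natCard (f j)) (hco i j hij))
    · intro i _
      apply orderOf_dvd_of_pow_eq_one
      have := congrFun (pow_orderOf_eq_one f) i
      rwa [Pi.pow_apply, Pi.one_apply] at this

lemma psi_pi {ι : Type*} [Fintype ι] {H : ι → Type*} [∀ i, Group (H i)]
    [∀ i, Finite (H i)]
    (hco : ∀ i j, i ≠ j → Nat.Coprime (Nat.card (H i)) (Nat.card (H j))) :
    psi (∀ i, H i) = ∏ i, psi (H i) := by
  classical
  have : ∀ i, Fintype (H i) := fun i => Fintype.ofFinite (H i)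
  rw [psi_eq_sum]
  simp_rw [psi_eq_sum]
  rw [Finset.prod_univ_sum (fun _ => Finset.univ) (fun i x => orderOf x),
    Fintype.piFinset_univ]
  exact Finset.sum_congr rfl fun f _ => orderOf_pi hco f

lemma avgO_pi {ι : Type*} [Fintype ι] {H : ι → Type*} [∀ i, Group (H i)]
    [∀ i, Finite (H i)]
    (hco : ∀ i j, i ≠ j → Nat.Coprime (Nat.card (H i)) (Nat.card (H j))) :
    avgO (∀ i, H i) = ∏ i, avgO (H i) := by
  classical
  have : ∀ i, Fintype (H i) := fun i => Fintype.ofFinite (H i)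
  rw [avgO, psi_pi hco, Nat.card_pi]
  push_cast
  rw [← Finset.prod_div_distrib]
  rfl

lemma isCyclic_pi {ι : Type*} [Fintype ι] {H : ι → Type*} [∀ i, Group (H i)]
    [∀ i, Finite (H i)]
    (hco : ∀ i j, i ≠ j → Nat.Coprime (Nat.card (H i)) (Nat.card (H j)))
    (hcyc : ∀ i, IsCyclic (H i)) : IsCyclic (∀ i, H i) := by
  classical
  have hg : ∀ i, ∃ g : H i, orderOf g = Nat.card (H i) := fun i => by
    obtain ⟨g, hgen⟩ := (hcyc i).exists_generator
    exact ⟨g, orderOf_eq_card_of_forall_mem_zpowers hgen⟩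
  choose g hgord using hg
  refine isCyclic_of_orderOf_eq_card g ?_
  rw [orderOf_pi hco, Nat.card_pi]
  exact Finset.prod_congr rfl fun i _ => hgord i

lemma psi_pgroup_ge {H : Type*} [Group H] [Finite H] {p : ℕ} [hp : Fact p.Prime]
    (hH : IsPGroup p H) : 1 + (Nat.card H - 1) * p ≤ psi H := by
  classical
  have : Fintype H := Fintype.ofFinite H
  rw [psi_eq_sum, Nat.card_eq_fintype_card,
    ← Finset.add_sum_erase _ _ (Finset.mem_univ (1 : H)), orderOf_one]
  have hcard : (Fintype.card H - 1) * p = ∑ _x ∈ Finset.univ.erase (1:H), p := by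
    rw [Finset.sum_const, Finset.card_erase_of_mem (Finset.mem_univ _), Finset.card_univ,
      smul_eq_mul]
  rw [hcard]
  refine add_le_add le_rfl (Finset.sum_le_sum fun x hx => ?_)
  obtain ⟨k, hk⟩ := IsPGroup.iff_orderOf.mp hH x
  have hx1 : x ≠ 1 := Finset.ne_of_mem_erase hx
  have hk0 : k ≠ 0 := by
    rintro rfl
    simp only [pow_zero, orderOf_eq_one_iff] at hk
    exact hx1 hk
  rw [hk]
  exact Nat.le_self_pow hk0 p

lemma avgO_pgroup_ge {H : Type*} [Group H] [Finite H] {p m : ℕ} [hp : Fact p.Prime]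
    (hH : IsPGroup p H) (hm0 : 0 < m) (hm : m ≤ Nat.card H) :
    (p : ℚ) - (p - 1) / m ≤ avgO H := by
  have hn0 : 0 < Nat.card H := Nat.card_pos
  have hP1 : (1 : ℚ) ≤ p := by exact_mod_cast hp.out.one_lt.le
  have hM0 : (0 : ℚ) < m := by exact_mod_cast hm0
  have hN0 : (0 : ℚ) < Nat.card H := by exact_mod_cast hn0
  rw [avgO, le_div_iff₀ hN0]
  have hpsi : (1 + ((Nat.card H : ℚ) - 1) * p) ≤ (psi H : ℚ) := by
    have := psi_pgroup_ge hH
    have hcast : ((1 + (Nat.card H - 1) * p : ℕ) : ℚ) = 1 + ((Nat.card H : ℚ) - 1) * p := by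
      push_cast [Nat.cast_sub hn0]
      ring
    calc (1 + ((Nat.card H : ℚ) - 1) * p) = ((1 + (Nat.card H - 1) * p : ℕ) : ℚ) := hcast.symm
      _ ≤ (psi H : ℚ) := by exact_mod_cast this
  have hNM : (1 : ℚ) ≤ (Nat.card H : ℚ) / m := (one_le_div hM0).mpr (by exact_mod_cast hm)
  have key : (p : ℚ) - 1 ≤ ((p : ℚ) - 1) * ((Nat.card H : ℚ) / m) := by
    nlinarith
  have expand : ((p : ℚ) - ((p:ℚ) - 1) / m) * (Nat.card H) =
      (p : ℚ) * (Nat.card H) - ((p:ℚ) - 1) * ((Nat.card H : ℚ) / m) := by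
    ring
  rw [expand]
  nlinarith

/-- numeric helper: for a prime power card `p ^ k` with `k ≥ 1`, `p ≤ card`. -/
lemma avgO_pgroup_ge_self {H : Type*} [Group H] [Finite H] {p : ℕ} [hp : Fact p.Prime]
    (hH : IsPGroup p H) (hdvd : p ∣ Nat.card H) :
    (p : ℚ) - (p - 1) / p ≤ avgO H :=
  avgO_pgroup_ge hH hp.out.pos (Nat.le_of_dvd Nat.card_pos hdvd)

theorem avgO_nilpotent_two_primes {G : Type*} [Group G] [Finite G]
    [Group.IsNilpotent G] (h : 2 ≤ (Nat.card G).primeFactors.card) :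
    (7/2 : ℚ) ≤ avgO G ∧
      (avgO G = 7/2 → Nonempty (G ≃* Multiplicative (ZMod 6))) ∧
      (¬ Nonempty (G ≃* Multiplicative (ZMod 6)) → 4 < avgO G) := by
  classical
  have hnormal : ∀ {p : ℕ} [Fact p.Prime] (P : Sylow p G), (↑P : Subgroup G).Normal :=
    fun {p} _ P => Sylow.normal_of_normalizerCondition normalizerCondition_of_isNilpotent P
  have hfact : ∀ p : (Nat.card G).primeFactors, Fact (Nat.Prime (p : ℕ)) :=
    fun p => ⟨Nat.prime_of_mem_primeFactors p.2⟩
  have hu : ∀ p : (Nat.card G).primeFactors, Unique (Sylow (p : ℕ) G) := fun p =>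
    letI := hfact p
    Sylow.unique_of_normal (Classical.arbitrary _) (hnormal _)
  let P : ∀ p : (Nat.card G).primeFactors, Sylow (p : ℕ) G := fun p => (hu p).default
  let e1 : (∀ p : (Nat.card G).primeFactors, ↥(P p)) ≃*
      (∀ p : (Nat.card G).primeFactors, ∀ Q : Sylow (p : ℕ) G, ↥Q) :=
    (MulEquiv.piCongrRight fun p =>
      letI := hu p
      MulEquiv.piUnique fun Q : Sylow (p : ℕ) G => ↥Q).symm
  let e : (∀ p : (Nat.card G).primeFactors, ↥(P p)) ≃* G :=
    e1.trans (Sylow.directProductOfNormal hnormal)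
  -- cards of the Sylow subgroups
  have hn : ∀ p : (Nat.card G).primeFactors,
      Nat.card ↥(P p) = (p : ℕ) ^ (Nat.card G).factorization (p : ℕ) := fun p =>
    letI := hfact p
    Sylow.card_eq_multiplicity (P p)
  have hcG : Nat.card G ≠ 0 := Nat.card_pos.ne'
  have hk1 : ∀ p : (Nat.card G).primeFactors, 1 ≤ (Nat.card G).factorization (p : ℕ) :=
    fun p => Nat.Prime.factorization_pos_of_dvd (hfact p).out hcG
      (Nat.dvd_of_mem_primeFactors p.2)
  have hco : ∀ p q : (Nat.card G).primeFactors, p ≠ q →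
      Nat.Coprime (Nat.card ↥(P p)) (Nat.card ↥(P q)) := by
    intro p q hpq
    rw [hn p, hn q]
    exact Nat.Coprime.pow _ _ (Nat.coprime_primes (hfact p).out (hfact q).out |>.mpr
      (fun hc => hpq (Subtype.ext hc)))
  have havgO : avgO G = ∏ p : (Nat.card G).primeFactors, avgO ↥(P p) := by
    rw [← avgO_congr e, avgO_pi hco]
  -- basic lower bounds
  have hA : ∀ p : (Nat.card G).primeFactors,
      ((p : ℚ)) - ((p : ℚ) - 1) / (p : ℚ) ≤ avgO ↥(P p) := fun p => by
    letI := hfact p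
    refine avgO_pgroup_ge_self (P p).isPGroup' ?_
    rw [hn p]
    exact dvd_pow_self _ (Nat.one_le_iff_ne_zero.mp (hk1 p))
  have hA32 : ∀ p : (Nat.card G).primeFactors, (3/2 : ℚ) ≤ avgO ↥(P p) := by
    intro p
    have hple := hA p
    have h2 : (2 : ℚ) ≤ (p : ℕ) := by exact_mod_cast (hfact p).out.two_le
    have hq0 : (0 : ℚ) < ((p : ℕ) : ℚ) := by linarith
    rcases eq_or_lt_of_le (hfact p).out.two_le with h2' | h3'
    · have hq2 : ((p : ℕ) : ℚ) = 2 := by exact_mod_cast h2'.symm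
      rw [hq2] at hple
      norm_num at hple
      linarith
    · have h3 : (3 : ℚ) ≤ ((p : ℕ) : ℚ) := by exact_mod_cast h3'
      have hd1 : (((p : ℕ) : ℚ) - 1) / ((p : ℕ) : ℚ) ≤ 1 := by
        rw [div_le_one hq0]; linarith
      linarith
  -- helper to close the goal once `4 < avgO G` is known
  have hclose : 4 < avgO G →
      (7/2 : ℚ) ≤ avgO G ∧
      (avgO G = 7/2 → Nonempty (G ≃* Multiplicative (ZMod 6))) ∧
      (¬ Nonempty (G ≃* Multiplicative (ZMod 6)) → 4 < avgO G) := by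
    intro h4
    refine ⟨by linarith, fun heq => ?_, fun _ => h4⟩
    rw [heq] at h4; norm_num at h4
  by_cases hbig : ∃ p : (Nat.card G).primeFactors, 5 ≤ (p : ℕ)
  · -- some prime ≥ 5 : average order exceeds 4
    obtain ⟨p, hp5⟩ := hbig
    apply hclose
    have hsplit : avgO G = avgO ↥(P p) * ∏ q ∈ Finset.univ.erase p, avgO ↥(P q) := by
      rw [havgO, ← Finset.mul_prod_erase _ _ (Finset.mem_univ p)]
    have hrest : (1:ℚ) ≤ ∏ q ∈ Finset.univ.erase p, avgO ↥(P q) := by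
      calc (1:ℚ) = ∏ _q ∈ Finset.univ.erase p, (1:ℚ) := (Finset.prod_const_one).symm
        _ ≤ ∏ q ∈ Finset.univ.erase p, avgO ↥(P q) :=
          Finset.prod_le_prod (fun q _ => by norm_num) (fun q _ => by linarith [hA32 q])
    have hAp : (4:ℚ) < avgO ↥(P p) := by
      have hple := hA p
      have h5 : (5 : ℚ) ≤ ((p : ℕ) : ℚ) := by exact_mod_cast hp5
      have hq0 : (0 : ℚ) < ((p : ℕ) : ℚ) := by linarith
      have hd1 : (((p : ℕ) : ℚ) - 1) / ((p : ℕ) : ℚ) < 1 := by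
        rw [div_lt_one hq0]; linarith
      linarith
    rw [hsplit]
    nlinarith
  · -- all primes are 2 or 3, hence exactly {2, 3}
    push_neg at hbig
    have hsub : (Nat.card G).primeFactors ⊆ ({2, 3} : Finset ℕ) := by
      intro q hq
      have hqp : q.Prime := Nat.prime_of_mem_primeFactors hq
      have hq5 : q < 5 := hbig ⟨q, hq⟩
      have hq2 : 2 ≤ q := hqp.two_le
      interval_cases q
      · simp
      · simp
      · exact absurd hqp (by norm_num)
    have hSeq : (Nat.card G).primeFactors = ({2, 3} : Finset ℕ) :=
      Finset.eq_of_subset_of_card_le hsub (by simpa using h)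
    have h2 : (2 : ℕ) ∈ (Nat.card G).primeFactors := by rw [hSeq]; simp
    have h3 : (3 : ℕ) ∈ (Nat.card G).primeFactors := by rw [hSeq]; simp
    set p2 : (Nat.card G).primeFactors := ⟨2, h2⟩ with hp2
    set p3 : (Nat.card G).primeFactors := ⟨3, h3⟩ with hp3
    have hne : p2 ≠ p3 := by
      intro hc
      have := congrArg Subtype.val hc
      norm_num at this
    have hp2c : (p2 : ℕ) = 2 := rfl
    have hp3c : (p3 : ℕ) = 3 := rfl
    have hScard : (Nat.card G).primeFactors.card = 2 := by rw [hSeq]; rfl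
    have huniv : (Finset.univ : Finset (Nat.card G).primeFactors) = {p2, p3} := by
      refine (Finset.eq_of_subset_of_card_le (Finset.subset_univ _) ?_).symm
      rw [Finset.card_univ, Fintype.card_coe, hScard, Finset.card_pair hne]
    have hprod2 : avgO G = avgO ↥(P p2) * avgO ↥(P p3) := by
      rw [havgO, huniv, Finset.prod_pair hne]
    have hA3 : (7/3 : ℚ) ≤ avgO ↥(P p3) := by
      have := hA p3
      norm_num at this
      linarith
    have hA2 : (3/2 : ℚ) ≤ avgO ↥(P p2) := hA32 p2
    -- case on the exponents
    by_cases hk2 : (Nat.card G).factorization 2 = 1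
    · by_cases hk3 : (Nat.card G).factorization 3 = 1
      · -- G ≅ C6
        have hn2 : Nat.card ↥(P p2) = 2 := by rw [hn p2, hp2c, hk2, pow_one]
        have hn3 : Nat.card ↥(P p3) = 3 := by rw [hn p3, hp3c, hk3, pow_one]
        have hcyc : ∀ p : (Nat.card G).primeFactors, IsCyclic ↥(P p) := by
          intro p
          letI := hfact p
          have h23 : (p : ℕ) = 2 ∨ (p : ℕ) = 3 := by
            have := hsub p.2; simpa using this
          haveI : Fact (Nat.Prime 2) := ⟨by norm_num⟩
          haveI : Fact (Nat.Prime 3) := ⟨by norm_num⟩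
          rcases h23 with hc | hc
          · have hpp : p = p2 := Subtype.ext (hc.trans hp2c.symm)
            rw [hpp]
            exact isCyclic_of_prime_card (p := 2) hn2
          · have hpp : p = p3 := Subtype.ext (hc.trans hp3c.symm)
            rw [hpp]
            exact isCyclic_of_prime_card (p := 3) hn3
        haveI : IsCyclic (∀ p : (Nat.card G).primeFactors, ↥(P p)) := isCyclic_pi hco hcyc
        have hGc : IsCyclic G := isCyclic_of_surjective e e.surjective
        have h6 : Nat.card G = 6 := by
          rw [← Nat.card_congr e.toEquiv, Nat.card_pi, huniv, Finset.prod_pair hne,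
            hn2, hn3]
          norm_num
        have hiso : Nonempty (G ≃* Multiplicative (ZMod 6)) := by
          rw [← h6]
          exact ⟨(zmodCyclicMulEquiv hGc).symm⟩
        refine ⟨?_, fun _ => hiso, fun hniso => absurd hiso hniso⟩
        rw [hprod2]
        nlinarith
      · -- 9 ∣ card G
        apply hclose
        have hk3' : 2 ≤ (Nat.card G).factorization 3 := by
          have h1 := hk1 p3; rw [hp3c] at h1; omega
        have hA3' : (25/9 : ℚ) ≤ avgO ↥(P p3) := by
          letI := hfact p3
          have h9 : 9 ≤ Nat.card ↥(P p3) := by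
            rw [hn p3, hp3c]
            calc (9 : ℕ) = 3 ^ 2 := by norm_num
              _ ≤ 3 ^ (Nat.card G).factorization 3 := Nat.pow_le_pow_right (by norm_num) hk3'
          have := avgO_pgroup_ge (H := ↥(P p3)) (p := 3) (m := 9) (P p3).isPGroup'
            (by norm_num) h9
          norm_num at this
          linarith
        rw [hprod2]
        nlinarith
    · -- 4 ∣ card G
      apply hclose
      have hk2' : 2 ≤ (Nat.card G).factorization 2 := by
        have h1 := hk1 p2; rw [hp2c] at h1; omega
      have hA2' : (7/4 : ℚ) ≤ avgO ↥(P p2) := by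
        letI := hfact p2
        have h4 : 4 ≤ Nat.card ↥(P p2) := by
          rw [hn p2, hp2c]
          calc (4 : ℕ) = 2 ^ 2 := by norm_num
            _ ≤ 2 ^ (Nat.card G).factorization 2 := Nat.pow_le_pow_right (by norm_num) hk2'
        have := avgO_pgroup_ge (H := ↥(P p2)) (p := 2) (m := 4) (P p2).isPGroup'
          (by norm_num) h4
        norm_num at this
        linarith
      rw [hprod2]
      nlinarith
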